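/- Let W be a nonnull hypergraph and 𝒳 a collection of hypergraphs containing the null hypergraph 𝒩. Define π_W on 𝒳 by: π_W(X) = ⊕(𝒞(X) △ 𝒞(W)) if 𝒞(W) ⊆ 𝒞(X) or V(W) ∩ V(X) = ∅, and π_W(X) = X otherwise (△ denotes symmetric difference of component sets). Then (𝒳, π_W, {𝒩, W}) is a hypergraph transformation, with 𝒮-maximal subsets 𝒟_X = {𝒩, W} when 𝒞(W) ⊆ 𝒞(X) and 𝒟_X = {𝒩} otherwise. -/

import Mathlib

open Classical

universe u

/-- A (finite) hypergraph over a vertex universe `V`: a finite vertex set together with a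
finite set of nonempty hyperedges, each a subset of the vertex set. -/
structure FinHypergraph (V : Type u) where
  verts : Set V
  edges : Set (Set V)
  verts_finite : verts.Finite
  edges_finite : edges.Finite
  edge_sub : ∀ e ∈ edges, e ⊆ verts
  edge_nonempty : ∀ e ∈ edges, e.Nonempty

namespace FinHypergraph

variable {V : Type u}

/-- The null hypergraph `𝒩`. -/
def Null : FinHypergraph V :=
  ⟨∅, ∅, Set.finite_empty, Set.finite_empty, by simp, by simp⟩

/-- Direct sum (hypergraph union) of two hypergraphs. -/
def dSum (X Y : FinHypergraph V) : FinHypergraph V where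
  verts := X.verts ∪ Y.verts
  edges := X.edges ∪ Y.edges
  verts_finite := X.verts_finite.union Y.verts_finite
  edges_finite := X.edges_finite.union Y.edges_finite
  edge_sub := by
    rintro e (he | he)
    · exact (X.edge_sub e he).trans Set.subset_union_left
    · exact (Y.edge_sub e he).trans Set.subset_union_right
  edge_nonempty := by
    rintro e (he | he)
    · exact X.edge_nonempty e he
    · exact Y.edge_nonempty e he

/-- Direct sum of a set of (pairwise disjoint) hypergraphs; the null hypergraph when the
unions fail to be finite.  The direct sum of the empty set is the null hypergraph. -/
noncomputable def bigSum (A : Set (FinHypergraph V)) : FinHypergraph V :=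
  if h : (⋃ X ∈ A, X.verts).Finite ∧ (⋃ X ∈ A, X.edges).Finite then
    { verts := ⋃ X ∈ A, X.verts
      edges := ⋃ X ∈ A, X.edges
      verts_finite := h.1
      edges_finite := h.2
      edge_sub := by
        intro e he
        simp only [Set.mem_iUnion] at he
        obtain ⟨X, hX, heX⟩ := he
        intro v hv
        simp only [Set.mem_iUnion]
        exact ⟨X, hX, X.edge_sub e heX hv⟩
      edge_nonempty := by
        intro e he
        simp only [Set.mem_iUnion] at he
        obtain ⟨X, hX, heX⟩ := he
        exact X.edge_nonempty e heX }
  else Null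

/-- The direct difference `X ⊖ Z`: the unique hypergraph `W` vertex disjoint from `Z`
with `X = W ⊕ Z`, when it exists. -/
noncomputable def dDiff (X Z : FinHypergraph V) : FinHypergraph V :=
  if h : ∃ W : FinHypergraph V, Disjoint W.verts Z.verts ∧ X = dSum W Z then h.choose else X

/-- Two vertices are connected in `X` if there is a walk between them. -/
def Connected (X : FinHypergraph V) (a b : V) : Prop :=
  a ∈ X.verts ∧ Relation.ReflTransGen (fun u w => ∃ e ∈ X.edges, u ∈ e ∧ w ∈ e) a b

/-- `C` is a connected component of `X`: its vertex set is a connectivity class of `X`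
and its edges are the edges of `X` lying inside it. -/
def IsComponent (X C : FinHypergraph V) : Prop :=
  (∃ v ∈ X.verts, C.verts = {w | Connected X v w}) ∧
  C.edges = {e ∈ X.edges | e ⊆ C.verts}

/-- The set `𝒞(X)` of connected components of `X`. -/
def comps (X : FinHypergraph V) : Set (FinHypergraph V) := {C | IsComponent X C}

/-- Component disjointness: `𝒞(X) ∩ 𝒞(Y) = ∅`. -/
def CompDisjoint (X Y : FinHypergraph V) : Prop := comps X ∩ comps Y = ∅

/-- `X ∧ H`: the union (direct sum) of the components of `X` meeting some hyperedge in `H`. -/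
noncomputable def wedge (X : FinHypergraph V) (H : Set (Set V)) : FinHypergraph V :=
  bigSum {C ∈ comps X | ∃ f ∈ H, (f ∩ C.verts).Nonempty}

/-- `𝒮` is component maximal in `𝒳` with `𝒮`-maximal subsets given by `D`. -/
def IsMaximalSubsets (dom S : Set (FinHypergraph V))
    (D : FinHypergraph V → Set (FinHypergraph V)) : Prop :=
  ∀ X ∈ dom,
    D X ⊆ S ∧
    (D X).Pairwise CompDisjoint ∧
    (Null ∈ S → Null ∈ D X) ∧
    (∀ T ∈ D X, comps T ⊆ comps X) ∧
    (∀ s ∈ S, comps s ⊆ comps X → ∃ T ∈ D X, comps s ⊆ comps T)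

/-- `𝒮_X := { S ∈ 𝒟_X | V(π(S)) ∩ V(X ⊖ S) = ∅ }`. -/
noncomputable def SXof (π : FinHypergraph V → FinHypergraph V)
    (D : FinHypergraph V → Set (FinHypergraph V)) (X : FinHypergraph V) : Set (FinHypergraph V) :=
  {s ∈ D X | Disjoint (π s).verts (dDiff X s).verts}

/-- `(𝒳, π, 𝒮)` (with `𝒮`-maximal subsets `D`) is a hypergraph transformation:
nonredundancy, component maximality, and preservation of the direct sum decomposition. -/
def IsHGT (dom : Set (FinHypergraph V)) (π : FinHypergraph V → FinHypergraph V)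
    (S : Set (FinHypergraph V)) (D : FinHypergraph V → Set (FinHypergraph V)) : Prop :=
  (∀ s ∈ S, comps s ∩ comps (π s) = ∅) ∧
  (Null ∈ S → π Null ≠ Null) ∧
  IsMaximalSubsets dom S D ∧
  ∀ X ∈ dom,
    (π '' SXof π D X).Pairwise (fun A B => Disjoint A.verts B.verts) ∧
    Set.InjOn π (SXof π D X) ∧
    π X = dSum (dDiff X (bigSum (SXof π D X))) (bigSum (π '' SXof π D X))

/-- `𝒮'` is upward closed with respect to `𝒮`. -/
def UpwardClosed (S' S : Set (FinHypergraph V)) : Prop :=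
  ∀ s ∈ S', ∀ t ∈ S, comps s ⊆ comps t → t ∈ S'

end FinHypergraph

/-!
`π_W` deletes the components of `W` from any `X` that contains them all and adds `W` to any `X`
vertex disjoint from `W`; in particular it swaps `𝒩` and `W`. Consequently `𝒮_X` is `{W}` when
`𝒞(W) ⊆ 𝒞(X)` (where `X ⊖ W = ⊕(𝒞(X) \ 𝒞(W))`), `{𝒩}` when `X` is vertex disjoint from `W`, and
empty otherwise, and in each case the decomposition identity for `π_W(X)` is a direct computation.
-/

namespace FinHypergraph

variable {V : Type u}

@[ext]
lemma ext {X Y : FinHypergraph V} (hv : X.verts = Y.verts) (he : X.edges = Y.edges) : X = Y := by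
  cases X; cases Y; simp_all

@[simp] lemma null_verts : (Null : FinHypergraph V).verts = ∅ := rfl

@[simp] lemma null_edges : (Null : FinHypergraph V).edges = ∅ := rfl

@[simp] lemma dSum_null (X : FinHypergraph V) : dSum X Null = X := by
  ext <;> simp [dSum]

@[simp] lemma null_dSum (X : FinHypergraph V) : dSum Null X = X := by
  ext <;> simp [dSum]

@[simp] lemma comps_null : comps (Null : FinHypergraph V) = ∅ := by
  ext C
  simp [comps, IsComponent]

section Connectivity

variable {X : FinHypergraph V} {a b c : V}

lemma Connected.mem_right (h : Connected X a b) : b ∈ X.verts := by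
  obtain ⟨ha, hab⟩ := h
  induction hab with
  | refl => exact ha
  | tail _ hstep _ =>
    obtain ⟨e, he, _, hbe⟩ := hstep
    exact X.edge_sub e he hbe

lemma connected_refl (ha : a ∈ X.verts) : Connected X a a :=
  ⟨ha, .refl⟩

lemma Connected.trans (hab : Connected X a b) (hbc : Connected X b c) : Connected X a c :=
  ⟨hab.1, hab.2.trans hbc.2⟩

lemma Connected.symm (h : Connected X a b) : Connected X b a := by
  have : Std.Symm fun u w => ∃ e ∈ X.edges, u ∈ e ∧ w ∈ e :=
    ⟨fun _ _ ⟨e, he, hu, hw⟩ => ⟨e, he, hw, hu⟩⟩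
  exact ⟨h.mem_right, Relation.ReflTransGen.stdSymm.symm _ _ h.2⟩

end Connectivity

section Components

variable {X C D : FinHypergraph V}

noncomputable def compOf (X : FinHypergraph V) (v : V) : FinHypergraph V where
  verts := {w | Connected X v w}
  edges := {e ∈ X.edges | e ⊆ {w | Connected X v w}}
  verts_finite := X.verts_finite.subset fun _ hw => Connected.mem_right hw
  edges_finite := X.edges_finite.subset fun _ he => he.1
  edge_sub := fun _ he => he.2
  edge_nonempty := fun e he => X.edge_nonempty e he.1

lemma compOf_mem_comps {v : V} (hv : v ∈ X.verts) : compOf X v ∈ comps X :=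
  ⟨⟨v, hv, rfl⟩, rfl⟩

lemma mem_compOf_verts {v : V} (hv : v ∈ X.verts) : v ∈ (compOf X v).verts :=
  connected_refl hv

lemma mem_compOf_edges {e : Set V} (he : e ∈ X.edges) {v : V} (hv : v ∈ e) :
    e ∈ (compOf X v).edges :=
  ⟨he, fun _ hw => ⟨X.edge_sub e he hv, .single ⟨e, he, hv, hw⟩⟩⟩

lemma verts_subset_of_mem_comps (hC : C ∈ comps X) : C.verts ⊆ X.verts := by
  obtain ⟨⟨v, -, hverts⟩, -⟩ := hC
  exact hverts ▸ fun _ hw => Connected.mem_right hw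

lemma edges_subset_of_mem_comps (hC : C ∈ comps X) : C.edges ⊆ X.edges :=
  hC.2 ▸ fun _ he => he.1

lemma verts_nonempty_of_mem_comps (hC : C ∈ comps X) : C.verts.Nonempty := by
  obtain ⟨⟨v, hv, hverts⟩, -⟩ := hC
  exact ⟨v, hverts ▸ connected_refl hv⟩

lemma eq_of_mem_comps_of_mem_verts (hC : C ∈ comps X) (hD : D ∈ comps X) {w : V}
    (hwC : w ∈ C.verts) (hwD : w ∈ D.verts) : C = D := by
  obtain ⟨⟨v, -, hvC⟩, hC⟩ := hC
  obtain ⟨⟨u, -, huD⟩, hD⟩ := hD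
  rw [hvC] at hwC
  rw [huD] at hwD
  have hverts : C.verts = D.verts := by
    rw [hvC, huD]
    ext x
    exact ⟨(hwD.trans hwC.symm).trans, (hwC.trans hwD.symm).trans⟩
  exact ext hverts (by rw [hC, hD, hverts])

lemma biUnion_comps_verts (X : FinHypergraph V) : ⋃ C ∈ comps X, C.verts = X.verts :=
  (Set.iUnion₂_subset fun _ hC => verts_subset_of_mem_comps hC).antisymm fun v hv =>
    Set.mem_iUnion₂.2 ⟨compOf X v, compOf_mem_comps hv, mem_compOf_verts hv⟩

lemma biUnion_comps_edges (X : FinHypergraph V) : ⋃ C ∈ comps X, C.edges = X.edges := by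
  refine (Set.iUnion₂_subset fun _ hC => edges_subset_of_mem_comps hC).antisymm fun e he => ?_
  obtain ⟨v, hv⟩ := X.edge_nonempty e he
  exact Set.mem_iUnion₂.2 ⟨compOf X v, compOf_mem_comps (X.edge_sub e he hv),
    mem_compOf_edges he hv⟩

lemma verts_subset_of_comps_subset {W : FinHypergraph V} (h : comps W ⊆ comps X) :
    W.verts ⊆ X.verts :=
  biUnion_comps_verts W ▸ Set.iUnion₂_subset fun _ hC => verts_subset_of_mem_comps (h hC)

lemma disjoint_comps_of_disjoint_verts {Y : FinHypergraph V} (h : Disjoint X.verts Y.verts) :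
    Disjoint (comps X) (comps Y) := by
  refine Set.disjoint_left.2 fun C hCX hCY => ?_
  obtain ⟨v, hv⟩ := verts_nonempty_of_mem_comps hCX
  exact Set.disjoint_left.1 h (verts_subset_of_mem_comps hCX hv) (verts_subset_of_mem_comps hCY hv)

lemma finite_biUnion_of_subset_comps {A : Set (FinHypergraph V)} (hA : A ⊆ comps X) :
    (⋃ C ∈ A, C.verts).Finite ∧ (⋃ C ∈ A, C.edges).Finite :=
  ⟨X.verts_finite.subset (Set.iUnion₂_subset fun _ hC => verts_subset_of_mem_comps (hA hC)),
    X.edges_finite.subset (Set.iUnion₂_subset fun _ hC => edges_subset_of_mem_comps (hA hC))⟩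

end Components

section DirectSums

variable {A B : Set (FinHypergraph V)}

lemma bigSum_verts (h : (⋃ X ∈ A, X.verts).Finite ∧ (⋃ X ∈ A, X.edges).Finite) :
    (bigSum A).verts = ⋃ X ∈ A, X.verts := by
  rw [bigSum, dif_pos h]

lemma bigSum_edges (h : (⋃ X ∈ A, X.verts).Finite ∧ (⋃ X ∈ A, X.edges).Finite) :
    (bigSum A).edges = ⋃ X ∈ A, X.edges := by
  rw [bigSum, dif_pos h]

lemma bigSum_comps (X : FinHypergraph V) : bigSum (comps X) = X := by
  have h := finite_biUnion_of_subset_comps (subset_refl (comps X))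
  ext1
  · rw [bigSum_verts h, biUnion_comps_verts]
  · rw [bigSum_edges h, biUnion_comps_edges]

lemma bigSum_empty : bigSum (∅ : Set (FinHypergraph V)) = Null := by
  simpa using bigSum_comps (Null : FinHypergraph V)

lemma bigSum_singleton (X : FinHypergraph V) : bigSum {X} = X := by
  have h : (⋃ Y ∈ ({X} : Set _), Y.verts).Finite ∧ (⋃ Y ∈ ({X} : Set _), Y.edges).Finite := by
    simpa using ⟨X.verts_finite, X.edges_finite⟩
  ext1
  · simp [bigSum_verts h]
  · simp [bigSum_edges h]

lemma bigSum_union (hA : (⋃ X ∈ A, X.verts).Finite ∧ (⋃ X ∈ A, X.edges).Finite)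
    (hB : (⋃ X ∈ B, X.verts).Finite ∧ (⋃ X ∈ B, X.edges).Finite) :
    bigSum (A ∪ B) = dSum (bigSum A) (bigSum B) := by
  have hAB : (⋃ X ∈ A ∪ B, X.verts).Finite ∧ (⋃ X ∈ A ∪ B, X.edges).Finite := by
    simp only [Set.biUnion_union]
    exact ⟨hA.1.union hB.1, hA.2.union hB.2⟩
  ext1
  · rw [bigSum_verts hAB, Set.biUnion_union, ← bigSum_verts hA, ← bigSum_verts hB]
    rfl
  · rw [bigSum_edges hAB, Set.biUnion_union, ← bigSum_edges hA, ← bigSum_edges hB]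
    rfl

lemma bigSum_comps_union_comps (X Y : FinHypergraph V) :
    bigSum (comps X ∪ comps Y) = dSum X Y := by
  rw [bigSum_union (finite_biUnion_of_subset_comps subset_rfl)
    (finite_biUnion_of_subset_comps subset_rfl), bigSum_comps, bigSum_comps]

variable {W X : FinHypergraph V}

lemma dSum_bigSum_comps_sdiff (h : comps W ⊆ comps X) :
    dSum (bigSum (comps X \ comps W)) W = X := by
  calc dSum (bigSum (comps X \ comps W)) W
      = dSum (bigSum (comps X \ comps W)) (bigSum (comps W)) := by rw [bigSum_comps]
    _ = bigSum (comps X \ comps W ∪ comps W) :=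
      (bigSum_union (finite_biUnion_of_subset_comps Set.sdiff_subset)
        (finite_biUnion_of_subset_comps h)).symm
    _ = X := by rw [Set.sdiff_union_of_subset h, bigSum_comps]

lemma disjoint_bigSum_comps_sdiff (h : comps W ⊆ comps X) :
    Disjoint (bigSum (comps X \ comps W)).verts W.verts := by
  rw [bigSum_verts (finite_biUnion_of_subset_comps Set.sdiff_subset), Set.disjoint_left]
  intro w hw hwW
  obtain ⟨C, hC, hwC⟩ := Set.mem_iUnion₂.1 hw
  obtain ⟨D, hD, hwD⟩ := Set.mem_iUnion₂.1 (biUnion_comps_verts W ▸ hwW)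
  exact hC.2 (eq_of_mem_comps_of_mem_verts hC.1 (h hD) hwC hwD ▸ hD)

end DirectSums

section DirectDifference

variable {U Y Z X : FinHypergraph V}

lemma disjoint_edges_of_disjoint_verts (h : Disjoint Y.verts Z.verts) :
    Disjoint Y.edges Z.edges := by
  refine Set.disjoint_left.2 fun e heY heZ => ?_
  obtain ⟨v, hv⟩ := Y.edge_nonempty e heY
  exact Set.disjoint_left.1 h (Y.edge_sub e heY hv) (Z.edge_sub e heZ hv)

lemma eq_of_dSum_eq_dSum (hU : Disjoint U.verts Z.verts) (hY : Disjoint Y.verts Z.verts)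
    (h : dSum U Z = dSum Y Z) : U = Y := by
  ext1
  · rw [← hU.sup_sdiff_cancel_right, ← hY.sup_sdiff_cancel_right]
    exact congrArg (fun T => T.verts \ Z.verts) h
  · rw [← (disjoint_edges_of_disjoint_verts hU).sup_sdiff_cancel_right,
      ← (disjoint_edges_of_disjoint_verts hY).sup_sdiff_cancel_right]
    exact congrArg (fun T => T.edges \ Z.edges) h

lemma dDiff_dSum (h : Disjoint Y.verts Z.verts) : dDiff (dSum Y Z) Z = Y := by
  have hex : ∃ U : FinHypergraph V, Disjoint U.verts Z.verts ∧ dSum Y Z = dSum U Z := ⟨Y, h, rfl⟩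
  rw [dDiff, dif_pos hex]
  exact eq_of_dSum_eq_dSum hex.choose_spec.1 h hex.choose_spec.2.symm

@[simp] lemma dDiff_null (X : FinHypergraph V) : dDiff X Null = X := by
  simpa using dDiff_dSum (Y := X) (Z := Null) (by simp)

lemma image_pairwise_injOn_dSum_of_SXof_eq_singleton
    {π : FinHypergraph V → FinHypergraph V} {D : FinHypergraph V → Set (FinHypergraph V)}
    {S : FinHypergraph V} (h : SXof π D X = {S}) (hX : π X = dSum (dDiff X S) (π S)) :
    (π '' SXof π D X).Pairwise (fun A B => Disjoint A.verts B.verts) ∧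
    Set.InjOn π (SXof π D X) ∧
    π X = dSum (dDiff X (bigSum (SXof π D X))) (bigSum (π '' SXof π D X)) := by
  rw [h, Set.image_singleton, bigSum_singleton, bigSum_singleton]
  exact ⟨Set.pairwise_singleton _ _, Set.injOn_singleton _ _, hX⟩

lemma image_pairwise_injOn_dSum_of_SXof_eq_empty
    {π : FinHypergraph V → FinHypergraph V} {D : FinHypergraph V → Set (FinHypergraph V)}
    (h : SXof π D X = ∅) (hX : π X = X) :
    (π '' SXof π D X).Pairwise (fun A B => Disjoint A.verts B.verts) ∧
    Set.InjOn π (SXof π D X) ∧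
    π X = dSum (dDiff X (bigSum (SXof π D X))) (bigSum (π '' SXof π D X)) := by
  rw [h, Set.image_empty, bigSum_empty, dDiff_null, dSum_null]
  exact ⟨Set.pairwise_empty _, Set.injOn_empty _, hX⟩

end DirectDifference

section Toggle

variable (W : FinHypergraph V)

/-- The map `π_W`. -/
noncomputable def toggle (X : FinHypergraph V) : FinHypergraph V :=
  if comps W ⊆ comps X ∨ Disjoint W.verts X.verts then bigSum (symmDiff (comps X) (comps W))
  else X

/-- The `{𝒩, W}`-maximal subsets `𝒟_X` of `π_W`. -/
def toggleMaxSubsets (X : FinHypergraph V) : Set (FinHypergraph V) :=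
  if comps W ⊆ comps X then {Null, W} else {Null}

variable {W} {X : FinHypergraph V}

lemma toggle_of_comps_subset (h : comps W ⊆ comps X) : toggle W X = bigSum (comps X \ comps W) := by
  rw [toggle, if_pos (Or.inl h), symmDiff_of_ge h]

lemma toggle_of_disjoint (h : Disjoint W.verts X.verts) : toggle W X = dSum X W := by
  rw [toggle, if_pos (Or.inr h), (disjoint_comps_of_disjoint_verts h.symm).symmDiff_eq_sup]
  exact bigSum_comps_union_comps X W

lemma toggle_of_not_comps_subset_of_not_disjoint (h₁ : ¬ comps W ⊆ comps X)
    (h₂ : ¬ Disjoint W.verts X.verts) : toggle W X = X := by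
  rw [toggle, if_neg (not_or.2 ⟨h₁, h₂⟩)]

variable (W)

@[simp] lemma toggle_null : toggle W Null = W := by
  rw [toggle_of_disjoint (by simp), null_dSum]

@[simp] lemma toggle_self : toggle W W = Null := by
  rw [toggle_of_comps_subset subset_rfl, sdiff_self, Set.bot_eq_empty, bigSum_empty]

lemma comps_inter_comps_toggle {s : FinHypergraph V} (hs : s ∈ ({Null, W} : Set _)) :
    comps s ∩ comps (toggle W s) = ∅ := by
  rcases hs with rfl | rfl <;> simp

lemma isMaximalSubsets_toggleMaxSubsets (dom : Set (FinHypergraph V)) :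
    IsMaximalSubsets dom {Null, W} (toggleMaxSubsets W) := by
  intro X _
  by_cases hc : comps W ⊆ comps X
  · rw [toggleMaxSubsets, if_pos hc]
    refine ⟨subset_rfl, ?_, fun _ => Set.mem_insert _ _, ?_, fun s hs _ => ⟨s, hs, subset_rfl⟩⟩
    · exact Set.pairwise_insert.2 ⟨Set.pairwise_singleton _ _,
        fun _ _ _ => ⟨by simp [CompDisjoint], by simp [CompDisjoint]⟩⟩
    · rintro T (rfl | rfl)
      exacts [by simp, hc]
  · rw [toggleMaxSubsets, if_neg hc]
    refine ⟨by simp, Set.pairwise_singleton _ _, fun _ => rfl, ?_, ?_⟩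
    · rintro T rfl
      simp
    · rintro s (rfl | rfl) hsX
      exacts [⟨Null, rfl, subset_rfl⟩, absurd hsX hc]

variable {W}

lemma SXof_toggle_of_comps_subset (hW : W.verts.Nonempty) (h : comps W ⊆ comps X) :
    SXof (toggle W) (toggleMaxSubsets W) X = {W} := by
  ext s
  simp only [SXof, toggleMaxSubsets, if_pos h, Set.mem_ofPred_eq, Set.mem_insert_iff,
    Set.mem_singleton_iff]
  constructor
  · rintro ⟨rfl | rfl, hd⟩
    · obtain ⟨v, hv⟩ := hW
      rw [toggle_null, dDiff_null] at hd
      exact absurd (verts_subset_of_comps_subset h hv) (Set.disjoint_left.1 hd hv)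
    · rfl
  · rintro rfl
    exact ⟨Or.inr rfl, by simp⟩

lemma SXof_toggle_of_disjoint (h₁ : ¬ comps W ⊆ comps X) (h₂ : Disjoint W.verts X.verts) :
    SXof (toggle W) (toggleMaxSubsets W) X = {Null} := by
  ext s
  simp only [SXof, toggleMaxSubsets, if_neg h₁, Set.mem_ofPred_eq, Set.mem_singleton_iff,
    and_iff_left_iff_imp]
  rintro rfl
  simpa using h₂

lemma SXof_toggle_of_not_comps_subset_of_not_disjoint (h₁ : ¬ comps W ⊆ comps X)
    (h₂ : ¬ Disjoint W.verts X.verts) : SXof (toggle W) (toggleMaxSubsets W) X = ∅ := by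
  ext s
  simp only [SXof, toggleMaxSubsets, if_neg h₁, Set.mem_ofPred_eq, Set.mem_singleton_iff,
    Set.mem_empty_iff_false, iff_false, not_and]
  rintro rfl
  simpa using h₂

end Toggle

end FinHypergraph

open FinHypergraph

theorem stmt19_general {V : Type u} (W : FinHypergraph V) (hW : W.verts.Nonempty)
    (𝒳 : Set (FinHypergraph V)) :
    IsHGT 𝒳
      (fun X => if comps W ⊆ comps X ∨ Disjoint W.verts X.verts
        then bigSum (symmDiff (comps X) (comps W)) else X)
      {Null, W}
      (fun X => if comps W ⊆ comps X then ({Null, W} : Set (FinHypergraph V))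
        else {Null}) := by
  change IsHGT 𝒳 (toggle W) {Null, W} (toggleMaxSubsets W)
  have hWN : W ≠ Null := by
    rintro rfl
    simp at hW
  refine ⟨fun _ => comps_inter_comps_toggle W, fun _ => by simpa using hWN,
    isMaximalSubsets_toggleMaxSubsets W 𝒳, fun X _ => ?_⟩
  by_cases hsub : comps W ⊆ comps X
  · refine image_pairwise_injOn_dSum_of_SXof_eq_singleton
      (SXof_toggle_of_comps_subset hW hsub) ?_
    conv_rhs => rw [← dSum_bigSum_comps_sdiff hsub]
    rw [dDiff_dSum (disjoint_bigSum_comps_sdiff hsub), toggle_self, dSum_null,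
      toggle_of_comps_subset hsub]
  by_cases hdisj : Disjoint W.verts X.verts
  · refine image_pairwise_injOn_dSum_of_SXof_eq_singleton
      (SXof_toggle_of_disjoint hsub hdisj) ?_
    rw [dDiff_null, toggle_null, toggle_of_disjoint hdisj]
  · exact image_pairwise_injOn_dSum_of_SXof_eq_empty
      (SXof_toggle_of_not_comps_subset_of_not_disjoint hsub hdisj)
      (toggle_of_not_comps_subset_of_not_disjoint hsub hdisj)

theorem stmt19 {V : Type u} (W : FinHypergraph V) (hW : W.verts.Nonempty)
    (𝒳 : Set (FinHypergraph V)) (hN : Null ∈ 𝒳) :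
    IsHGT 𝒳
      (fun X => if comps W ⊆ comps X ∨ Disjoint W.verts X.verts
        then bigSum (symmDiff (comps X) (comps W)) else X)
      {Null, W}
      (fun X => if comps W ⊆ comps X then ({Null, W} : Set (FinHypergraph V))
        else {Null}) :=
  stmt19_general W hW 𝒳
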